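/- arXiv:2406.18616 — 6 statements merged into one kernel-verified Lean document; each statement's English description precedes it below -/
import Mathlib

section
/- Flexible Sequential Composition Law: let P, Q, A, B, C, D : S → Prop. If (∀ s, P s → A s), (∀ s, B s → C s), and (∀ s, D s → Q s), then spec P Q ⊑ (spec A B ; spec C D). -/
def refines {S : Type*} (t₁ t₂ : (S → Prop) → (S → Prop)) : Prop :=
  ∀ R : S → Prop, ∀ s : S, t₁ R s → t₂ R s

def spec {S : Type*} (P Q : S → Prop) : (S → Prop) → (S → Prop) :=
  fun R s => P s ∧ ∀ s', Q s' → R s'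

/-- Sequential composition of predicate transformers. -/
def seq {S : Type*} (t₁ t₂ : (S → Prop) → (S → Prop)) : (S → Prop) → (S → Prop) :=
  fun R => t₁ (t₂ R)

theorem flexible_sequential_composition_law {S : Type*} (P Q A B C D : S → Prop)
    (hPA : ∀ s, P s → A s) (hBC : ∀ s, B s → C s) (hDQ : ∀ s, D s → Q s) :
    refines (spec P Q) (seq (spec A B) (spec C D)) := by
  intro R s ⟨hP, hQ⟩
  exact ⟨hPA s hP, fun s' hB => ⟨hBC s' hB, fun s'' hD => hQ s'' (hDQ s'' hD)⟩⟩
end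

section
/- Initialised Iteration Law: let P, I, G : S → Prop and let V : S → ℕ be a variant. Let body := spec₂ (fun s => I s ∧ G s) (fun s s' => I s' ∧ V s' < V s). Then spec P (fun s => I s ∧ ¬ G s) ⊑ (spec P I ; while G body). -/
def spec₂ {S : Type*} (P : S → Prop) (Q : S → S → Prop) : (S → Prop) → (S → Prop) :=
  fun R s => P s ∧ ∀ s', Q s s' → R s'

/-- The while loop: `(while G t) R` is the least fixed point (Knaster–Tarski:
`sInf` of the prefixed points) of `fun W s => (G s → t W s) ∧ (¬ G s → R s)`
in the complete lattice `S → Prop`. -/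
def loopWhile {S : Type*} (G : S → Prop) (t : (S → Prop) → (S → Prop)) :
    (S → Prop) → (S → Prop) :=
  fun R => sInf {W : S → Prop | (fun s => (G s → t W s) ∧ (¬ G s → R s)) ≤ W}

lemma sInf_pi_apply {S : Type*} (T : Set (S → Prop)) (s : S) :
    sInf T s ↔ ∀ W ∈ T, W s := by
  simp [sInf_apply, iInf_apply]

theorem initialised_iteration_law {S : Type*} (P I G : S → Prop) (V : S → ℕ) :
    refines (spec P (fun s => I s ∧ ¬ G s))
      (seq (spec P I)
        (loopWhile G
          (spec₂ (fun s => I s ∧ G s) (fun s s' => I s' ∧ V s' < V s)))) := by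
  intro R s hs
  obtain ⟨hP, hR⟩ := hs
  refine ⟨hP, fun s' hI => ?_⟩
  rw [loopWhile, sInf_pi_apply]
  intro W hW
  simp only [Set.mem_setOf_eq] at hW
  clear hP s
  induction' hn : V s' using Nat.strong_induction_on with n ih generalizing s'
  subst hn
  apply hW
  constructor
  · intro hG
    exact ⟨⟨hI, hG⟩, fun t ⟨hIt, hVt⟩ => ih _ hVt _ hIt rfl⟩
  · intro hG
    exact hR _ ⟨hI, hG⟩
end

section
/- Traverse Law (precise invariant form): fix a type L and work over the state space S = L × ℕ. Let Q : L → ℕ → Prop, pre : L × ℕ → Prop, and m n : ℕ with m ≤ n. Let body := (spec₂ (fun p => Q p.1 p.2 ∧ p.2 < n) (fun p p' => p'.2 = p.2 ∧ Q p'.1 (p.2 + 1)) ; assign (fun p => (p.1, p.2 + 1))). Then spec pre (fun p => Q p.1 n) ⊑ (spec pre (fun p => Q p.1 m ∧ p.2 = m) ; while (fun p => p.2 < n) body). (Taking Q l i := ∀ k, m ≤ k → k < i → P l k recovers the paper's statement about establishing P(l,k) for all k in [m,n).) -/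
def assign {S : Type*} (f : S → S) : (S → Prop) → (S → Prop) :=
  fun R => R ∘ f

theorem traverse_law {L : Type*} (Q : L → ℕ → Prop) (pre : L × ℕ → Prop) (m n : ℕ)
    (hmn : m ≤ n) :
    refines (spec pre (fun p : L × ℕ => Q p.1 n))
      (seq (spec pre (fun p : L × ℕ => Q p.1 m ∧ p.2 = m))
        (loopWhile (fun p : L × ℕ => p.2 < n)
          (seq
            (spec₂ (fun p : L × ℕ => Q p.1 p.2 ∧ p.2 < n)
              (fun p p' => p'.2 = p.2 ∧ Q p'.1 (p.2 + 1)))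
            (assign (fun p : L × ℕ => (p.1, p.2 + 1)))))) := by

  intro R s hs
  obtain ⟨hpre, hpost⟩ := hs
  refine ⟨hpre, ?_⟩
  rintro s' ⟨hQm, hs'2⟩
  -- show loopWhile ... R s'
  simp only [loopWhile, sInf_apply, iInf_apply, iInf_Prop_eq, Set.mem_setOf_eq]
  rintro ⟨W, hW⟩
  simp only [Set.mem_setOf_eq] at hW ⊢
  have key : ∀ k, ∀ p : L × ℕ, n - p.2 = k → Q p.1 p.2 → p.2 ≤ n → W p := by
    intro k
    induction k using Nat.strong_induction_on with
    | _ k ih =>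
      intro p hk hQ hle
      apply hW p
      constructor
      · intro hlt
        refine ⟨⟨hQ, hlt⟩, ?_⟩
        rintro p' ⟨hp'2, hQ'⟩
        show W (p'.1, p'.2 + 1)
        rw [hp'2]
        exact ih (n - (p.2 + 1)) (by omega) (p'.1, p.2 + 1) rfl hQ' (by omega)
      · intro hnlt
        have : p.2 = n := by omega
        exact hpost p (this ▸ hQ)
  subst hs'2
  exact key (n - s'.2) s' rfl hQm hmn
end

section
/- Alternation Law (guarded alternation): let P, Q : S → Prop, let ι be an index type, and let G : ι → S → Prop be a family of guards. If for every state s, P s implies ∃ i, G i s, then spec P Q ⊑ IF G (fun i => spec (fun s => G i s ∧ P s) Q). -/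
/-- Guarded alternation over a family of guards `G` with branch programs `t`. -/
def IF {S : Type*} {ι : Type*} (G : ι → S → Prop)
    (t : ι → (S → Prop) → (S → Prop)) : (S → Prop) → (S → Prop) :=
  fun R s => (∃ i, G i s) ∧ ∀ i, G i s → t i R s

theorem alternation_law {S : Type*} {ι : Type*} (P Q : S → Prop) (G : ι → S → Prop)
    (h : ∀ s, P s → ∃ i, G i s) :
    refines (spec P Q) (IF G (fun i => spec (fun s => G i s ∧ P s) Q)) := by
  intro R s hs
  exact ⟨h s hs.1, fun i hi => ⟨⟨hi, hs.1⟩, hs.2⟩⟩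
end

section
/- Iteration Law: let I, G : S → Prop be an invariant and a guard, and let V : S → ℕ be a variant. Then spec I (fun s => I s ∧ ¬ G s) ⊑ while G (spec₂ (fun s => I s ∧ G s) (fun s s' => I s' ∧ V s' < V s)). -/
theorem iteration_law {S : Type*} (I G : S → Prop) (V : S → ℕ) :
    refines (spec I (fun s => I s ∧ ¬ G s))
      (loopWhile G (spec₂ (fun s => I s ∧ G s) (fun s s' => I s' ∧ V s' < V s))) := by
  intro R s hs
  obtain ⟨hI, hR⟩ := hs
  have key : ∀ W : S → Prop,
      (fun s => (G s → spec₂ (fun s => I s ∧ G s)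
          (fun s s' => I s' ∧ V s' < V s) W s) ∧ (¬ G s → R s)) ≤ W →
      ∀ s, I s → W s := by
    intro W hW s
    induction s using Nat.strongRecMeasure (f := V) with
    | ind s IH =>
      intro hI
      apply hW
      constructor
      · intro hG
        exact ⟨⟨hI, hG⟩, fun s' ⟨hI', hV'⟩ => IH s' hV' hI'⟩
      · intro hnG
        exact hR s ⟨hI, hnG⟩
  intro p hp
  simp only [Set.mem_range] at hp
  obtain ⟨⟨W, hW⟩, rfl⟩ := hp
  exact key W hW s hI
end

section
/- Expand Law: fix types S and T, and let P, Q : S → Prop. Then lifting the specification spec P Q to the enlarged state space S × T equals the specification over S × T whose postcondition additionally requires the new component to keep its initial value: lift (spec P Q) = spec₂ (fun p : S × T => P p.1) (fun p p' => Q p'.1 ∧ p'.2 = p.2), as an equality of predicate transformers on S × T. -/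
/-- Lift a transformer on `S` to a transformer on the enlarged state space `S × T`. -/
def lift {S T : Type*} (t : (S → Prop) → (S → Prop)) :
    (S × T → Prop) → (S × T → Prop) :=
  fun R p => t (fun s' => R (s', p.2)) p.1

theorem expand_law {S T : Type*} (P Q : S → Prop) :
    lift (T := T) (spec P Q) =
      spec₂ (fun p : S × T => P p.1) (fun p p' => Q p'.1 ∧ p'.2 = p.2) := by
  funext R p
  simp only [lift, spec, spec₂, eq_iff_iff]
  constructor
  · rintro ⟨hP, h⟩
    exact ⟨hP, fun ⟨s', t'⟩ ⟨hQ, ht⟩ => by subst ht; exact h s' hQ⟩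
  · rintro ⟨hP, h⟩
    exact ⟨hP, fun s' hQ => h (s', p.2) ⟨hQ, rfl⟩⟩
end
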